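/- arXiv:gr-qc/9906021 — 2 statements merged into one kernel-verified Lean document; each statement's English description precedes it below -/
import Mathlib

section
/- Let u : [0, s₀] → ℝ be a differentiable nonnegative function with u(0) = K ≥ 1 and satisfying u'(s) ≤ u(s)² + u(s) for all s. Then u(s) ≤ K / ((K+1)e^{−s} − K) for all s with (K+1)e^{−s} > K. In particular, if s ≤ 1/(4K) then u(s)/K ≤ ((K+1)e^{−s} − K)^{−1} < 2. -/
open Real Set

/-!
The Riccati inequality `u' ≤ u² + u` linearises under `u ↦ u / (u + 1)`: the function
`e^{-s} u(s) / (u(s) + 1)` has derivative `e^{-s} (u' - u² - u) / (u + 1)² ≤ 0`, so it is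
bounded by its initial value `K / (K + 1)`. Solving `e^{-s} u / (u + 1) ≤ K / (K + 1)` for `u`
gives the bound, and `e^{-s} ≥ 1 - s` makes its denominator exceed `1/2` for `s ≤ 1/(4K)`.
-/

theorem hasDerivAt_exp_neg_mul_div_add_one {u : ℝ → ℝ} {u' s : ℝ} (hu : HasDerivAt u u' s)
    (hs : u s + 1 ≠ 0) :
    HasDerivAt (fun t => exp (-t) * (u t / (u t + 1)))
      (exp (-s) * ((u' - u s * (u s + 1)) / (u s + 1) ^ 2)) s := by
  have hexp : HasDerivAt (fun t => exp (-t)) (-exp (-s)) s := by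
    simpa using (hasDerivAt_neg s).exp
  refine (hexp.fun_mul (hu.fun_div (hu.add_const 1) hs)).congr_deriv ?_
  field_simp
  ring

theorem antitoneOn_exp_neg_mul_div_add_one {u : ℝ → ℝ} {D : Set ℝ} (hD : Convex ℝ D)
    (hdiff : ∀ s ∈ D, DifferentiableAt ℝ u s) (hgt : ∀ s ∈ D, -1 < u s)
    (hode : ∀ s ∈ D, deriv u s ≤ u s ^ 2 + u s) :
    AntitoneOn (fun t => exp (-t) * (u t / (u t + 1))) D := by
  have hderiv : ∀ s ∈ D, HasDerivAt (fun t => exp (-t) * (u t / (u t + 1)))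
      (exp (-s) * ((deriv u s - u s * (u s + 1)) / (u s + 1) ^ 2)) s := fun s hs =>
    hasDerivAt_exp_neg_mul_div_add_one (hdiff s hs).hasDerivAt (by linarith [hgt s hs])
  refine antitoneOn_of_deriv_nonpos hD
    (fun s hs => (hderiv s hs).continuousAt.continuousWithinAt)
    (fun s hs => (hderiv s (interior_subset hs)).differentiableAt.differentiableWithinAt)
    (fun s hs => ?_)
  have hs := interior_subset hs
  rw [(hderiv s hs).deriv]
  have hnum : deriv u s - u s * (u s + 1) ≤ 0 := by linarith [hode s hs]
  exact mul_nonpos_of_nonneg_of_nonpos (exp_pos _).le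
    (div_nonpos_of_nonpos_of_nonneg hnum (sq_nonneg _))

theorem le_div_of_mul_div_add_one_le {x K c : ℝ} (hx : -1 < x) (hK : -1 < K)
    (h : c * (x / (x + 1)) ≤ K / (K + 1)) (hc : K < (K + 1) * c) :
    x ≤ K / ((K + 1) * c - K) := by
  have hx1 : 0 < x + 1 := by linarith
  have hK1 : 0 < K + 1 := by linarith
  rw [← mul_div_assoc, div_le_div_iff₀ hx1 hK1] at h
  rw [le_div_iff₀ (by linarith)]
  linarith

theorem half_lt_add_one_mul_exp_neg_sub {K s : ℝ} (hK : 1 ≤ K) (hs₀ : 0 ≤ s)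
    (hs : s ≤ 1 / (4 * K)) :
    1 / 2 < (K + 1) * exp (-s) - K := by
  rcases hs₀.eq_or_lt with rfl | hs_pos
  · norm_num
  have hexp : 1 - s < exp (-s) := by linarith [add_one_lt_exp (neg_ne_zero.2 hs_pos.ne')]
  have hsK : s * (4 * K) ≤ 1 := (le_div_iff₀ (by positivity)).1 hs
  nlinarith

/-- ODE comparison estimate. If `u : [0,s₀] → ℝ` is differentiable, nonnegative,
`u(0) = K ≥ 1` and `u' ≤ u² + u`, then `u(s) ≤ K/((K+1)e^{−s} − K)` whenever
`(K+1)e^{−s} > K`; and if `s ≤ 1/(4K)` then `u(s)/K ≤ ((K+1)e^{−s} − K)⁻¹ < 2`. -/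
theorem stmt2 (s₀ K : ℝ) (u : ℝ → ℝ)
    (hdiff : ∀ s ∈ Icc 0 s₀, DifferentiableAt ℝ u s)
    (hnonneg : ∀ s ∈ Icc 0 s₀, 0 ≤ u s)
    (hK : 1 ≤ K) (hu0 : u 0 = K)
    (hode : ∀ s ∈ Icc 0 s₀, deriv u s ≤ (u s) ^ 2 + u s) :
    (∀ s ∈ Icc 0 s₀, (K + 1) * Real.exp (-s) > K →
      u s ≤ K / ((K + 1) * Real.exp (-s) - K)) ∧
    (∀ s ∈ Icc 0 s₀, s ≤ 1 / (4 * K) →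
      u s / K ≤ ((K + 1) * Real.exp (-s) - K)⁻¹ ∧
      ((K + 1) * Real.exp (-s) - K)⁻¹ < 2) := by
  have hgt : ∀ s ∈ Icc 0 s₀, -1 < u s := fun s hs => by linarith [hnonneg s hs]
  have hanti := antitoneOn_exp_neg_mul_div_add_one (convex_Icc 0 s₀) hdiff hgt hode
  have hbound : ∀ s ∈ Icc 0 s₀, (K + 1) * exp (-s) > K →
      u s ≤ K / ((K + 1) * exp (-s) - K) := by
    intro s hs hc
    have h0 : (0 : ℝ) ∈ Icc 0 s₀ := ⟨le_rfl, hs.1.trans hs.2⟩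
    have hdecay := hanti h0 hs hs.1
    simp only [neg_zero, exp_zero, one_mul, hu0] at hdecay
    exact le_div_of_mul_div_add_one_le (hgt s hs) (by linarith) hdecay hc
  refine ⟨hbound, fun s hs hsK => ?_⟩
  have hhalf := half_lt_add_one_mul_exp_neg_sub hK hs.1 hsK
  have hpos : 0 < (K + 1) * exp (-s) - K := by linarith
  constructor
  · rw [div_le_iff₀ (by linarith), inv_mul_eq_div]
    exact hbound s hs (by linarith)
  · rw [inv_lt_comm₀ hpos two_pos]
    linarith
end

section
/- Let W be an antisymmetric 4×4 real matrix (a bivector on Minkowski space) decomposed as W = A·cos θ + (*A)·sin θ where A and *A are dual independent simple bivectors. If for every bivector B the Hodge dual satisfies ‖*B‖ ≤ 2√3·‖B‖, then ‖A‖ < 4‖W‖ and ‖*A‖ < 4‖W‖. -/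
open Matrix
attribute [local instance] Matrix.frobeniusNormedAddCommGroup
attribute [local instance] Matrix.frobeniusNormedSpace

/-- Let `W ≠ 0` be an antisymmetric 4×4 real matrix (a bivector on Minkowski
space), decomposed as `W = A cos θ + (*A) sin θ` where `A` and `*A = hodge A` are dual
bivectors, `hodge` being the (linear) Hodge dual `hodge`, which on Lorentzian bivectors satisfies
`hodge (hodge B) = −B`. If `‖*B‖ ≤ 2√3 ‖B‖` for every bivector `B`, then
`‖A‖ < 4‖W‖` and `‖*A‖ < 4‖W‖`. -/
theorem stmt5 (hodge : Matrix (Fin 4) (Fin 4) ℝ →ₗ[ℝ] Matrix (Fin 4) (Fin 4) ℝ)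
    (hstarstar : ∀ B : Matrix (Fin 4) (Fin 4) ℝ, Bᵀ = -B → hodge (hodge B) = -B)
    (hstarnorm : ∀ B : Matrix (Fin 4) (Fin 4) ℝ, Bᵀ = -B →
      ‖hodge B‖ ≤ 2 * Real.sqrt 3 * ‖B‖)
    (hstarskew : ∀ B : Matrix (Fin 4) (Fin 4) ℝ, Bᵀ = -B → (hodge B)ᵀ = -(hodge B))
    (W A : Matrix (Fin 4) (Fin 4) ℝ) (θ : ℝ)
    (hW : Wᵀ = -W) (hA : Aᵀ = -A) (hWne : W ≠ 0)
    (hdecomp : W = Real.cos θ • A + Real.sin θ • hodge A) :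
    ‖A‖ < 4 * ‖W‖ ∧ ‖hodge A‖ < 4 * ‖W‖ := by
  set c := Real.cos θ
  set s := Real.sin θ
  have hcs : s ^ 2 + c ^ 2 = 1 := Real.sin_sq_add_cos_sq θ
  have hhW : hodge W = c • hodge A - s • A := by
    rw [hdecomp, map_add, LinearMap.map_smul, LinearMap.map_smul, hstarstar A hA]
    module
  have hAeq : A = c • W - s • hodge W := by
    rw [hhW, hdecomp]
    match_scalars <;> linarith [hcs]
  have hAseq : hodge A = s • W + c • hodge W := by
    rw [hhW, hdecomp]
    match_scalars <;> linarith [hcs]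
  have hWpos : (0:ℝ) < ‖W‖ := norm_pos_iff.mpr hWne
  have hWn : ‖hodge W‖ ≤ 2 * Real.sqrt 3 * ‖W‖ := hstarnorm W hW
  have hsqrt3 : Real.sqrt 3 ≤ 1.75 := by
    nlinarith [Real.sq_sqrt (by norm_num : (0:ℝ) ≤ 3), Real.sqrt_nonneg 3]
  have key : ∀ a b : ℝ, a ^ 2 + b ^ 2 ≤ 1 →
      |a| * ‖W‖ + |b| * ‖hodge W‖ < 4 * ‖W‖ := by
    intro a b hab
    have h1 : |a| * ‖W‖ + |b| * ‖hodge W‖ ≤ |a| * ‖W‖ + |b| * (2 * Real.sqrt 3 * ‖W‖) := by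
      have := abs_nonneg b
      nlinarith
    have h2 : |a| * ‖W‖ + |b| * (2 * Real.sqrt 3 * ‖W‖) < 4 * ‖W‖ := by
      have hbd : |a| + |b| * (2 * Real.sqrt 3) < 4 := by
        have h3 : (0:ℝ) ≤ Real.sqrt 3 := Real.sqrt_nonneg 3
        have h5 : |a| + |b| * (2 * Real.sqrt 3) ≤ |a| + |b| * 3.5 := by
          nlinarith [abs_nonneg b]
        have h6 : |a| + |b| * 3.5 < 4 := by
          nlinarith [sq_abs a, sq_abs b, abs_nonneg a, abs_nonneg b,
            sq_nonneg (3.5 * |a| - |b|)]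
        linarith
      nlinarith
    linarith
  constructor
  · calc ‖A‖ ≤ ‖c • W‖ + ‖s • hodge W‖ := by rw [hAeq]; exact norm_sub_le _ _
    _ = |c| * ‖W‖ + |s| * ‖hodge W‖ := by rw [norm_smul, norm_smul]; rfl
    _ < 4 * ‖W‖ := key c s (by nlinarith)
  · calc ‖hodge A‖ ≤ ‖s • W‖ + ‖c • hodge W‖ := by rw [hAseq]; exact norm_add_le _ _
    _ = |s| * ‖W‖ + |c| * ‖hodge W‖ := by rw [norm_smul, norm_smul]; rfl
    _ < 4 * ‖W‖ := key s c (by nlinarith)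
end
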